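/- For the (1,4) spectral curve, define the free energies: F_0(λ,t) = −t⁶/972 + 2λt³/27 − 3λ²/4 + (λ²/4)·log(3λ²), F_1(λ) = −(1/12)·log λ, and for g ≥ 2, F_g(λ) = (B_{2g}/(2g(2g−2)))·λ^{2−2g}, regarded as real-analytic functions of λ > 0 (t ∈ ℝ a parameter); here B_n denotes the n-th Bernoulli number, defined by w/(e^w − 1) = ∑_{n≥0} B_n·w^n/n!, and B_n(X) denotes the n-th Bernoulli polynomial, defined by w·e^{Xw}/(e^w − 1) = ∑_{n≥0} B_n(X)·w^n/n!. Then for all t ∈ ℝ, λ > 0, ν ∈ ℝ, and every integer m ≥ 1: B_{m+1}(ν)/(m(m+1)) · λ^{−m} = ∑ (((1−ν)^n − (−ν)^n)/n!)·F_g^{(n)}(λ), where the sum is over all pairs (g, n) with g ≥ 0, n ≥ 1, and 2g − 2 + n = m (derivatives in λ). -/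

import Mathlib

/-- The free energies of the (1,4) spectral curve:
`F₀(λ,t) = −t⁶/972 + 2λt³/27 − 3λ²/4 + (λ²/4)·log(3λ²)`, `F₁(λ) = −(1/12)·log λ`, and
`F_g(λ) = (B_{2g}/(2g(2g−2)))·λ^{2−2g}` for `g ≥ 2`. -/
noncomputable def F14 (t : ℝ) : ℕ → ℝ → ℝ
  | 0 => fun l => -t ^ 6 / 972 + 2 * l * t ^ 3 / 27 - 3 * l ^ 2 / 4
      + l ^ 2 / 4 * Real.log (3 * l ^ 2)
  | 1 => fun l => -(1 / 12) * Real.log l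
  | (g + 2) => fun l =>
      ((bernoulli (2 * (g + 2)) : ℝ) / ((2 * (g + 2) : ℝ) * ((2 * (g + 2) : ℝ) - 2)))
        * l ^ ((2 : ℤ) - 2 * ((g : ℤ) + 2))

/-!
For `2g − 2 + n = m` every term `F_g⁽ⁿ⁾(λ)` equals `(−1)^m (m−1)! (2g−1) (B_{2g}/(2g)!) λ^{−m}`
(for `g = 0, 1` because `F₀⁽³⁾ = 1/λ` and `F₁' = −1/(12λ)`). Hence the right-hand side is
`(−1)^m (m−1)! λ^{−m}` times the coefficient of `w^{m+2}` in
`(wβ'(w) − β(w))(e^{(1−ν)w} − e^{−νw})`, where `β(w) = w/(e^w − 1) = ∑ B_j w^j/j!`; the odd `j`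
contribute nothing, since `B_j = 0` for odd `j ≥ 3` and `j − 1 = 0` for `j = 1`.
As `wβ' − β = −w²e^w/(e^w − 1)²`, this product is
`−w · w e^{(1−ν)w}/(e^w − 1) = −w ∑ B_N(1−ν) w^N/N!`, and `B_{m+1}(1−ν) = (−1)^{m+1} B_{m+1}(ν)`.
-/

open Finset
open scoped Nat

section BernoulliPolynomial
open Polynomial

variable {K : Type*} [Field K] [CharZero K]

theorem aeval_bernoulli_div_factorial (N : ℕ) (x : K) :
    aeval x (bernoulli N) / N ! =
      ∑ p ∈ antidiagonal N, (_root_.bernoulli p.1 / p.1 ! : K) * (x ^ p.2 / p.2 !) := by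
  rw [Polynomial.bernoulli, map_sum, sum_div, Nat.sum_antidiagonal_eq_sum_range_succ_mk]
  refine sum_congr rfl fun k hk => ?_
  rw [aeval_monomial, map_mul, eq_ratCast, map_natCast,
    Nat.cast_choose K (Nat.lt_succ_iff.mp (mem_range.mp hk))]
  have : (N ! : K) ≠ 0 := Nat.cast_ne_zero.mpr N.factorial_ne_zero
  field_simp

theorem aeval_bernoulli_one_add (n : ℕ) (x : K) :
    aeval (1 + x) (bernoulli n) = aeval x (bernoulli n) + n * x ^ (n - 1) := by
  simpa [aeval_comp] using congrArg (aeval x) (bernoulli_comp_one_add_X n)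

theorem aeval_bernoulli_one_sub (n : ℕ) (x : K) :
    aeval (1 - x) (bernoulli n) = (-1) ^ n * aeval x (bernoulli n) := by
  simpa [aeval_comp] using congrArg (aeval x) (bernoulli_comp_one_sub_X n)

theorem sum_antidiagonal_sub_one_mul_bernoulli (N : ℕ) (x : K) :
    ∑ p ∈ antidiagonal (N + 1), ((p.1 : K) - 1) * (_root_.bernoulli p.1 / p.1 !)
        * (x ^ p.2 / p.2 !)
      = N * (aeval x (bernoulli (N + 1)) / (N + 1)!) - x * (aeval x (bernoulli N) / N !) := by
  have hshift : ∑ p ∈ antidiagonal (N + 1),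
      (p.2 : K) * (_root_.bernoulli p.1 / p.1 !) * (x ^ p.2 / p.2 !)
        = x * (aeval x (bernoulli N) / N !) := by
    rw [Nat.sum_antidiagonal_succ', aeval_bernoulli_div_factorial, mul_sum]
    simp only [Nat.cast_zero, zero_mul, zero_add]
    refine sum_congr rfl fun p _ => ?_
    rw [Nat.factorial_succ]
    push_cast
    field_simp
    ring
  rw [aeval_bernoulli_div_factorial, mul_sum, ← hshift, ← sum_sub_distrib]
  refine sum_congr rfl fun p hp => ?_
  have hp1 : (p.1 : K) = N + 1 - p.2 := by
    rw [eq_sub_iff_add_eq]; exact_mod_cast HasAntidiagonal.mem_antidiagonal.mp hp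
  rw [hp1]
  ring

theorem sum_antidiagonal_sub_one_mul_bernoulli_mul_one_sub_pow_sub_pow (N : ℕ) (x : K) :
    ∑ p ∈ antidiagonal (N + 1), ((p.1 : K) - 1) * (_root_.bernoulli p.1 / p.1 !)
        * (((1 - x) ^ p.2 - (-x) ^ p.2) / p.2 !)
      = -((-1) ^ N * aeval x (bernoulli N) / N !) := by
  have hdiff (z : K) :
      ∑ p ∈ antidiagonal (N + 1), ((p.1 : K) - 1) * (_root_.bernoulli p.1 / p.1 !)
        * (((1 + z) ^ p.2 - z ^ p.2) / p.2 !) = -(aeval (1 + z) (bernoulli N) / N !) := by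
    have hB : aeval z (bernoulli N) = aeval (1 + z) (bernoulli N) - N * z ^ (N - 1) := by
      rw [aeval_bernoulli_one_add]; ring
    calc _ = ∑ p ∈ antidiagonal (N + 1), ((p.1 : K) - 1) * (_root_.bernoulli p.1 / p.1 !)
              * ((1 + z) ^ p.2 / p.2 !)
            - ∑ p ∈ antidiagonal (N + 1), ((p.1 : K) - 1) * (_root_.bernoulli p.1 / p.1 !)
              * (z ^ p.2 / p.2 !) := by
          rw [← sum_sub_distrib]
          exact sum_congr rfl fun p _ => by ring
      _ = _ := by
          rw [sum_antidiagonal_sub_one_mul_bernoulli, sum_antidiagonal_sub_one_mul_bernoulli,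
            aeval_bernoulli_one_add, hB]
          rcases N with _ | N
          · simp
          · rw [Nat.add_sub_cancel, Nat.factorial_succ (N + 1)]
            have hN : ((N : K) + 1 + 1) ≠ 0 := by norm_cast
            have hfac : ((N + 1)! : K) ≠ 0 := Nat.cast_ne_zero.mpr (N + 1).factorial_ne_zero
            push_cast
            field_simp
            ring
  simpa [← sub_eq_add_neg, aeval_bernoulli_one_sub, mul_div_assoc] using hdiff (-x)

end BernoulliPolynomial

theorem sum_filter_two_mul_add_eq_sum_antidiagonal {M : Type*} [AddCommMonoid M] (N : ℕ)
    (f : ℕ × ℕ → M) (hf : ∀ p ∈ antidiagonal N, Odd p.1 ∨ p.2 = 0 → f p = 0) :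
    ∑ p ∈ (range (N + 1) ×ˢ range (N + 1)).filter (fun p => 1 ≤ p.2 ∧ 2 * p.1 + p.2 = N),
        f (2 * p.1, p.2)
      = ∑ p ∈ antidiagonal N, f p := by
  refine sum_of_injOn (fun p => (2 * p.1, p.2)) ?_ ?_ ?_ fun _ _ => rfl
  · rintro ⟨g, n⟩ - ⟨g', n'⟩ - h
    simp only [Prod.mk.injEq] at h ⊢
    omega
  · rintro ⟨g, n⟩ h
    simp only [mem_coe, mem_filter, mem_product, mem_range] at h
    simp only [mem_coe, HasAntidiagonal.mem_antidiagonal]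
    omega
  · rintro ⟨j, n⟩ hp hnot
    refine hf _ hp ?_
    rw [HasAntidiagonal.mem_antidiagonal] at hp
    by_contra! h
    obtain ⟨g, rfl⟩ := Nat.not_odd_iff_even.mp h.1
    refine hnot ⟨(g, n), ?_, by simp only [two_mul]⟩
    simp only [mem_coe, mem_filter, mem_product, mem_range]
    omega

section Calculus
variable {𝕜 F : Type*} [NontriviallyNormedField 𝕜] [NormedAddCommGroup F] [NormedSpace 𝕜 F]

theorem iteratedDeriv_succ_eq_of_hasDerivAt {f f' : 𝕜 → F} {s : Set 𝕜} (hs : IsOpen s)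
    (hf : ∀ y ∈ s, HasDerivAt f (f' y) y) (n : ℕ) {x : 𝕜} (hx : x ∈ s) :
    iteratedDeriv (n + 1) f x = iteratedDeriv n f' x := by
  rw [iteratedDeriv_succ']
  refine Filter.EventuallyEq.iteratedDeriv_eq n ?_
  filter_upwards [hs.mem_nhds hx] with y hy using (hf y hy).deriv

theorem iteratedDeriv_inv (n : ℕ) (x : 𝕜) :
    iteratedDeriv n Inv.inv x = (-1) ^ n * n ! * x ^ (-1 - n : ℤ) := by
  rw [iteratedDeriv_eq_iterate, iter_deriv_inv]

end Calculus

theorem prod_range_neg_natCast_sub {R : Type*} [CommRing R] (a n : ℕ) :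
    ∏ i ∈ range n, (-(a : R) - i) = (-1) ^ n * a.ascFactorial n := by
  have h := prod_neg (s := range n) (fun i => ((a + i : ℕ) : R))
  rw [card_range] at h
  rw [Nat.ascFactorial_eq_prod_range, Nat.cast_prod, ← h]
  refine prod_congr rfl fun i _ => ?_
  push_cast
  ring

theorem hasDerivAt_log_three_mul_sq {x : ℝ} (hx : x ≠ 0) :
    HasDerivAt (fun y => Real.log (3 * y ^ 2)) (2 / x) x := by
  convert ((hasDerivAt_pow 2 x).const_mul 3).log (by positivity) using 1
  field_simp
  ring

theorem iteratedDeriv_F14_zero (t : ℝ) {x : ℝ} (hx : x ≠ 0) (n : ℕ) :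
    iteratedDeriv (n + 3) (F14 t 0) x = (-1) ^ n * n ! * x ^ (-1 - n : ℤ) := by
  have h1 : ∀ y ∈ ({0}ᶜ : Set ℝ), HasDerivAt (F14 t 0)
      (2 * t ^ 3 / 27 - y + y / 2 * Real.log (3 * y ^ 2)) y := by
    intro y hy
    refine (((((((hasDerivAt_id y).const_mul 2).mul_const (t ^ 3)).div_const 27).const_add
      (-t ^ 6 / 972)).sub (((hasDerivAt_pow 2 y).const_mul 3).div_const 4)).add
      (((hasDerivAt_pow 2 y).div_const 4).mul (hasDerivAt_log_three_mul_sq hy))).congr_deriv ?_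
    simp only [Nat.cast_ofNat, Nat.add_one_sub_one, pow_one, mul_one]
    field_simp
    ring
  have h2 : ∀ y ∈ ({0}ᶜ : Set ℝ),
      HasDerivAt (fun y => 2 * t ^ 3 / 27 - y + y / 2 * Real.log (3 * y ^ 2))
        (Real.log (3 * y ^ 2) / 2) y := by
    intro y hy
    refine (((hasDerivAt_id y).const_sub (2 * t ^ 3 / 27)).add
      (((hasDerivAt_id y).div_const 2).mul (hasDerivAt_log_three_mul_sq hy))).congr_deriv ?_
    have hy : y ≠ 0 := hy
    simp only [id]
    field_simp
    ring
  have h3 : ∀ y ∈ ({0}ᶜ : Set ℝ), HasDerivAt (fun y => Real.log (3 * y ^ 2) / 2) y⁻¹ y := by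
    intro y hy
    refine ((hasDerivAt_log_three_mul_sq hy).div_const 2).congr_deriv ?_
    ring
  have hs : IsOpen ({0}ᶜ : Set ℝ) := isOpen_compl_singleton
  rw [iteratedDeriv_succ_eq_of_hasDerivAt hs h1 _ hx,
    iteratedDeriv_succ_eq_of_hasDerivAt hs h2 _ hx,
    iteratedDeriv_succ_eq_of_hasDerivAt hs h3 _ hx, iteratedDeriv_inv]

theorem iteratedDeriv_F14_one (t x : ℝ) (n : ℕ) :
    iteratedDeriv (n + 1) (F14 t 1) x = -(1 / 12) * ((-1) ^ n * n ! * x ^ (-1 - n : ℤ)) := by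
  rw [show F14 t 1 = fun l => -(1 / 12) * Real.log l from rfl, iteratedDeriv_const_mul_field,
    iteratedDeriv_succ', Real.deriv_log', iteratedDeriv_inv]

theorem iteratedDeriv_F14_add_two (t x : ℝ) (g n : ℕ) :
    iteratedDeriv n (F14 t (g + 2)) x
      = (bernoulli (2 * (g + 2)) : ℝ) / ((2 * (g + 2) : ℝ) * ((2 * (g + 2) : ℝ) - 2))
          * ((-1) ^ n * (2 * g + 2).ascFactorial n) * x ^ (-(2 * g + 2 + n : ℕ) : ℤ) := by
  rw [show F14 t (g + 2) = fun l => (bernoulli (2 * (g + 2)) : ℝ)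
      / ((2 * (g + 2) : ℝ) * ((2 * (g + 2) : ℝ) - 2)) * l ^ ((2 : ℤ) - 2 * ((g : ℤ) + 2)) from rfl,
    iteratedDeriv_const_mul_field, iteratedDeriv_eq_iterate, iter_deriv_zpow]
  have hbase : (((2 : ℤ) - 2 * ((g : ℤ) + 2) : ℤ) : ℝ) = -((2 * g + 2 : ℕ) : ℝ) := by
    push_cast; ring
  have hexp : (2 : ℤ) - 2 * ((g : ℤ) + 2) - n = -((2 * g + 2 + n : ℕ) : ℤ) := by
    push_cast; ring
  rw [hbase, hexp, prod_range_neg_natCast_sub]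
  ring

theorem iteratedDeriv_F14 (t : ℝ) {l : ℝ} (hl : l ≠ 0) {g n m : ℕ} (hm : 1 ≤ m)
    (h : 2 * g + n = m + 2) :
    iteratedDeriv n (F14 t g) l = (-1) ^ m * (m - 1)! *
      ((((2 * g : ℕ) : ℝ) - 1) * (bernoulli (2 * g) / (2 * g)! : ℝ)) * l ^ (-(m : ℤ)) := by
  obtain ⟨k, rfl⟩ : ∃ k, m = k + 1 := ⟨m - 1, by omega⟩
  rw [Nat.add_sub_cancel, show (-((k + 1 : ℕ) : ℤ)) = -1 - k by push_cast; ring]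
  rcases g with _ | _ | g
  · obtain rfl : n = k + 3 := by omega
    rw [iteratedDeriv_F14_zero t hl]
    simp only [mul_zero, Nat.cast_zero, _root_.bernoulli_zero, Nat.factorial_zero]
    push_cast
    ring
  · obtain rfl : n = k + 1 := by omega
    rw [iteratedDeriv_F14_one]
    norm_num [bernoulli_two]
    ring
  · obtain rfl : k = 2 * g + 1 + n := by omega
    have hfac : ((2 * (g + 2))! : ℝ) = (2 * g + 4) * (2 * g + 3) * (2 * g + 2) * (2 * g + 1)! := by
      rw [show 2 * (g + 2) = 2 * g + 1 + 1 + 1 + 1 by ring]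
      simp only [Nat.factorial_succ]
      push_cast
      ring
    have hsign : (-1 : ℝ) ^ (2 * g + 1 + n + 1) = (-1) ^ n := by
      rw [show 2 * g + 1 + n + 1 = n + 2 * (g + 1) by ring, pow_add, pow_mul, neg_one_sq, one_pow,
        mul_one]
    rw [iteratedDeriv_F14_add_two, hsign, hfac, ← Nat.factorial_mul_ascFactorial,
      show (-1 : ℤ) - ((2 * g + 1 + n : ℕ) : ℤ) = -((2 * g + 2 + n : ℕ) : ℤ) by push_cast; ring]
    have : ((2 * g + 1)! : ℝ) ≠ 0 := Nat.cast_ne_zero.mpr (Nat.factorial_ne_zero _)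
    have : (g : ℝ) + 1 ≠ 0 := by positivity
    rw [show 2 * ((g : ℝ) + 2) - 2 = 2 * (g + 1) by ring]
    push_cast
    field_simp
    ring

/-- For all `t ∈ ℝ`, `λ > 0`, `ν ∈ ℝ` and every integer `m ≥ 1`:
`B_{m+1}(ν)/(m(m+1)) · λ^{−m}
  = ∑_{(g,n) : g ≥ 0, n ≥ 1, 2g−2+n = m} (((1−ν)ⁿ − (−ν)ⁿ)/n!)·F_g⁽ⁿ⁾(λ)`,
where `B_n(X)` is the `n`-th Bernoulli polynomial. -/
theorem voros_eq_free_energy_14 (t l ν : ℝ) (hl : 0 < l) (m : ℕ) (hm : 1 ≤ m) :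
    (Polynomial.aeval ν (Polynomial.bernoulli (m + 1)) : ℝ) / ((m : ℝ) * ((m : ℝ) + 1))
        * l ^ (-(m : ℤ))
      = ∑ p ∈ (Finset.range (m + 3) ×ˢ Finset.range (m + 3)).filter
            (fun p => 1 ≤ p.2 ∧ 2 * p.1 + p.2 = m + 2),
          (((1 - ν) ^ p.2 - (-ν) ^ p.2) / (p.2.factorial : ℝ))
            * iteratedDeriv p.2 (F14 t p.1) l := by
  set w : ℕ × ℕ → ℝ := fun p =>
    ((p.1 : ℝ) - 1) * (bernoulli p.1 / p.1 !) * (((1 - ν) ^ p.2 - (-ν) ^ p.2) / p.2 !) with hw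
  have hvanish : ∀ p ∈ antidiagonal (m + 2), Odd p.1 ∨ p.2 = 0 → w p = 0 := by
    rintro ⟨j, n⟩ - (hj | rfl)
    · rcases eq_or_ne j 1 with rfl | hj1
      · simp [hw]
      · simp [hw, bernoulli_eq_zero_of_odd hj (by grind)]
    · simp [hw]
  have hcoef : (-1) ^ m * ((m - 1)! : ℝ) * -((-1) ^ (m + 1) *
      Polynomial.aeval ν (Polynomial.bernoulli (m + 1)) / (m + 1)!)
      = Polynomial.aeval ν (Polynomial.bernoulli (m + 1)) / (m * (m + 1)) := by
    obtain ⟨k, rfl⟩ : ∃ k, m = k + 1 := ⟨m - 1, by omega⟩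
    rw [Nat.add_sub_cancel, Nat.factorial_succ, Nat.factorial_succ]
    have : (k ! : ℝ) ≠ 0 := Nat.cast_ne_zero.mpr k.factorial_ne_zero
    push_cast
    field_simp
    rw [← pow_add, Odd.neg_one_pow ⟨k + 1, by ring⟩]
    ring
  calc _ = (-1) ^ m * ((m - 1)! : ℝ) * l ^ (-(m : ℤ)) * ∑ p ∈ antidiagonal (m + 1 + 1), w p := by
        rw [hw, sum_antidiagonal_sub_one_mul_bernoulli_mul_one_sub_pow_sub_pow, ← hcoef]
        ring
    _ = (-1) ^ m * ((m - 1)! : ℝ) * l ^ (-(m : ℤ)) * ∑ p ∈ (range (m + 3) ×ˢ range (m + 3)).filter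
            (fun p => 1 ≤ p.2 ∧ 2 * p.1 + p.2 = m + 2), w (2 * p.1, p.2) := by
        rw [sum_filter_two_mul_add_eq_sum_antidiagonal (m + 2) w hvanish]
    _ = _ := by
        rw [mul_sum]
        refine sum_congr rfl fun p hp => ?_
        rw [iteratedDeriv_F14 t hl.ne' hm (mem_filter.mp hp).2.2, hw]
        ring
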